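/- Let p ≥ 3 be odd, ω a primitive p-th root of unity, and U the operator on ℂ^p ⊗ ℂ^p given by U(e_i ⊗ e_j) = ω^{i−j} e_{i+1} ⊗ e_{j+1} (indices mod p). Then there exists a scalar ζ of modulus making it unitary, such that R = ζ · Σ_{j=0}^{p−1} ω^{j²} U^j satisfies the Yang-Baxter equation on ℂ^p ⊗ ℂ^p. -/

import Mathlib

open Matrix

/-- The operator on `(ℂ^ι)^{⊗n}` (modeled as matrices indexed by `Fin n → ι`)
acting as `R` on tensor factors `i, i+1` and as the identity elsewhere. -/
def localOp {ι : Type} [DecidableEq ι]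
    (R : Matrix (ι × ι) (ι × ι) ℂ) (n i : ℕ) (h : i + 1 < n) :
    Matrix (Fin n → ι) (Fin n → ι) ℂ :=
  fun f g =>
    (if ∀ k : Fin n, (k : ℕ) ≠ i → (k : ℕ) ≠ i + 1 → f k = g k then 1 else 0) *
      R (f ⟨i, Nat.lt_of_succ_lt h⟩, f ⟨i + 1, h⟩)
        (g ⟨i, Nat.lt_of_succ_lt h⟩, g ⟨i + 1, h⟩)

/-- The Yang–Baxter equation `(R⊗I)(I⊗R)(R⊗I) = (I⊗R)(R⊗I)(I⊗R)`. -/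
def YangBaxter {ι : Type} [Fintype ι] [DecidableEq ι] (R : Matrix (ι × ι) (ι × ι) ℂ) : Prop :=
  localOp R 3 0 (by omega) * localOp R 3 1 (by omega) * localOp R 3 0 (by omega) =
    localOp R 3 1 (by omega) * localOp R 3 0 (by omega) * localOp R 3 1 (by omega)

/-- The operator `U` on `ℂ^p ⊗ ℂ^p` defined on the standard basis by
`U(e_i ⊗ e_j) = ω^{i−j} e_{i+1} ⊗ e_{j+1}`, indices mod `p`. -/
def gaussU (p : ℕ) [NeZero p] (ω : ℂ) :
    Matrix (ZMod p × ZMod p) (ZMod p × ZMod p) ℂ :=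
  fun r c => if r.1 = c.1 + 1 ∧ r.2 = c.2 + 1 then ω ^ (c.1 - c.2).val else 0

/-!
Let `ψ a = ω ^ a` be the additive character of `ZMod p` and let `W x` be the weighted shift
`e_c ↦ ψ (x (c₁ - c₂)) e_{c + (x, x)}`. Then `U ^ j = W j`, `W x * W y = W (x + y)` and
`(W x)ᴴ = W (-x)`, so `R₀ = ∑ x, ψ (x²) • W x` satisfies
`R₀ * R₀ᴴ = ∑ z, (∑ y, ψ ((y + z)² - y²)) • W z = p • 1`: the inner sum is
`ψ (z²) ∑ y, ψ (2 y z)`, which vanishes for `z ≠ 0` because `2` is invertible mod `p`.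
Hence `ζ = p ^ (-1/2)` makes `R` unitary.

On three tensor factors, `R₀ ⊗ I` and `I ⊗ R₀` act on functions by
`v ↦ ∑ s, ψ (s² + s (a - b)) v (a - s, b - s, c)` and
`v ↦ ∑ s, ψ (s² + s (b - c)) v (a, b - s, c - s)`. Both sides of the Yang–Baxter equation become
triple sums that agree term by term after the substitution `(s₁, s₂, s₃) ↦ (s₂ - s₁, s₁ + s₃, s₁)`;
the phases then differ by a polynomial identity, so no Gauss sum has to be evaluated.
-/

section WeightedShift

variable {A : Type} [CommRing A] [DecidableEq A] {K : Type*} [CommSemiring K] (ψ : AddChar A K)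

def weightedShift (x : A) : Matrix (A × A) (A × A) K :=
  fun r c => if r = c + (x, x) then ψ (x * (c.1 - c.2)) else 0

theorem weightedShift_zero : weightedShift ψ 0 = 1 := by
  ext r c
  simp [weightedShift, Matrix.one_apply, Prod.mk_zero_zero]

variable [Fintype A]

theorem weightedShift_mulVec (x : A) (v : A × A → K) (r : A × A) :
    (weightedShift ψ x *ᵥ v) r = ψ (x * (r.1 - r.2)) * v (r - (x, x)) := by
  simp only [mulVec, dotProduct, weightedShift, ite_mul, zero_mul]
  simp_rw [← sub_eq_iff_eq_add, eq_comm (a := r - (x, x))]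
  rw [Finset.sum_ite_eq']
  simp

theorem weightedShift_mul (x y : A) :
    weightedShift ψ x * weightedShift ψ y = weightedShift ψ (x + y) := by
  refine Matrix.ext_iff_mulVec.2 fun v => funext fun r => ?_
  simp only [← mulVec_mulVec, weightedShift_mulVec, ← mul_assoc, ← AddChar.map_add_eq_mul]
  congr 2
  · simp only [Prod.fst_sub, Prod.snd_sub]
    ring
  · ext <;> simp only [Prod.fst_sub, Prod.snd_sub] <;> ring

def gaussMatrix : Matrix (A × A) (A × A) K :=
  ∑ x, ψ (x ^ 2) • weightedShift ψ x

theorem gaussMatrix_mulVec (v : A × A → K) (r : A × A) :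
    (gaussMatrix ψ *ᵥ v) r = ∑ s, ψ (s ^ 2 + s * (r.1 - r.2)) * v (r - (s, s)) := by
  simp only [gaussMatrix, sum_mulVec, smul_mulVec, Finset.sum_apply, Pi.smul_apply,
    weightedShift_mulVec, smul_eq_mul, ← mul_assoc, AddChar.map_add_eq_mul]

end WeightedShift

section Unitary

variable {A : Type} [CommRing A] [DecidableEq A]

theorem conjTranspose_weightedShift [Finite A] (ψ : AddChar A ℂ) (x : A) :
    (weightedShift ψ x)ᴴ = weightedShift ψ (-x) := by
  ext r c
  simp only [conjTranspose_apply, weightedShift]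
  by_cases h : r = c + (-x, -x)
  · subst h
    rw [if_pos (by ext <;> simp), if_pos rfl, Complex.star_def, ← AddChar.map_neg_eq_conj]
    congr 1
    simp only [Prod.fst_add, Prod.snd_add]
    ring
  · rw [if_neg h, if_neg fun h' => h (by rw [h']; ext <;> simp), star_zero]

variable [Fintype A] {ψ : AddChar A ℂ}

theorem sum_addChar_add_sq_mul_star_sq (hψ : ψ.IsPrimitive) (h2 : IsUnit (2 : A)) (z : A) :
    ∑ y, ψ ((y + z) ^ 2) * star (ψ (y ^ 2)) = if z = 0 then (Fintype.card A : ℂ) else 0 := by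
  calc ∑ y, ψ ((y + z) ^ 2) * star (ψ (y ^ 2)) = ∑ y, ψ (z ^ 2) * ψ (y * (2 * z)) := by
        refine Finset.sum_congr rfl fun y _ => ?_
        rw [Complex.star_def, ← AddChar.map_neg_eq_conj, ← AddChar.map_add_eq_mul,
          ← AddChar.map_add_eq_mul]
        ring_nf
    _ = ψ (z ^ 2) * if 2 * z = 0 then (Fintype.card A : ℂ) else 0 := by
        rw [← Finset.mul_sum, AddChar.sum_mulShift _ hψ, Nat.cast_ite, Nat.cast_zero]
    _ = if z = 0 then (Fintype.card A : ℂ) else 0 := by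
        by_cases hz : z = 0 <;> simp [hz, h2.mul_right_eq_zero]

theorem gaussMatrix_mul_conjTranspose (hψ : ψ.IsPrimitive) (h2 : IsUnit (2 : A)) :
    gaussMatrix ψ * (gaussMatrix ψ)ᴴ = (Fintype.card A : ℂ) • 1 := by
  calc gaussMatrix ψ * (gaussMatrix ψ)ᴴ
      = ∑ x, ∑ y, (ψ (x ^ 2) * star (ψ (y ^ 2))) • weightedShift ψ (x - y) := by
        simp only [gaussMatrix, conjTranspose_sum, conjTranspose_smul,
          conjTranspose_weightedShift, Finset.sum_mul_sum, smul_mul_smul_comm,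
          weightedShift_mul, sub_eq_add_neg]
    _ = ∑ z, (∑ y, ψ ((y + z) ^ 2) * star (ψ (y ^ 2))) • weightedShift ψ z := by
        simp only [Finset.sum_smul]
        rw [Finset.sum_comm]
        conv_rhs => rw [Finset.sum_comm]
        refine Finset.sum_congr rfl fun y _ => ?_
        exact Fintype.sum_equiv (Equiv.subRight y) _ _ fun x => by simp
    _ = (Fintype.card A : ℂ) • 1 := by
        simp only [sum_addChar_add_sq_mul_star_sq hψ h2, ite_smul, zero_smul,
          Finset.sum_ite_eq', Finset.mem_univ, if_true, weightedShift_zero]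

end Unitary

theorem inv_sqrt_smul_mem_unitaryGroup {n : Type*} [Fintype n] [DecidableEq n]
    {M : Matrix n n ℂ} {c : ℝ} (hc : 0 < c) (hM : M * Mᴴ = (c : ℂ) • 1) :
    ((Real.sqrt c : ℂ)⁻¹ • M) ∈ unitaryGroup n ℂ := by
  have hsqrt : (Real.sqrt c : ℂ) ≠ 0 := by exact_mod_cast (Real.sqrt_pos.2 hc).ne'
  have hsq : (Real.sqrt c : ℂ) * Real.sqrt c = c := by
    exact_mod_cast Real.mul_self_sqrt hc.le
  rw [mem_unitaryGroup_iff, star_smul, smul_mul_smul_comm, star_eq_conjTranspose, hM, smul_smul,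
    Complex.star_def, map_inv₀, Complex.conj_ofReal, ← hsq, ← mul_inv,
    inv_mul_cancel₀ (mul_ne_zero hsqrt hsqrt), one_smul]

def finThreeArrowEquiv (α : Type*) : (Fin 3 → α) ≃ α × α × α where
  toFun f := (f 0, f 1, f 2)
  invFun q := ![q.1, q.2.1, q.2.2]
  left_inv f := by ext i; fin_cases i <;> rfl
  right_inv _ := rfl

theorem finThreeArrowEquiv_symm_apply {α : Type*} (q : α × α × α) :
    (finThreeArrowEquiv α).symm q = ![q.1, q.2.1, q.2.2] := rfl

section LocalOp

variable {ι : Type} [DecidableEq ι] (R : Matrix (ι × ι) (ι × ι) ℂ)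

theorem localOp_smul (c : ℂ) (n i : ℕ) (h : i + 1 < n) :
    localOp (c • R) n i h = c • localOp R n i h := by
  ext f g
  simp only [localOp, Matrix.smul_apply, smul_eq_mul]
  ring

variable [Fintype ι]

theorem YangBaxter.smul {R : Matrix (ι × ι) (ι × ι) ℂ} (hR : YangBaxter R) (c : ℂ) :
    YangBaxter (c • R) := by
  simp only [YangBaxter, localOp_smul, smul_mul_smul_comm]
  rw [hR]

theorem localOp_zero_mulVec (h : 0 + 1 < 3) (v : (Fin 3 → ι) → ℂ) (f : Fin 3 → ι) :
    (localOp R 3 0 h *ᵥ v) f = (R *ᵥ fun q => v ![q.1, q.2, f 2]) (f 0, f 1) := by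
  simp only [mulVec, dotProduct, localOp]
  rw [← (finThreeArrowEquiv ι).symm.sum_comp]
  simp [finThreeArrowEquiv_symm_apply, Fin.forall_fin_succ, Fintype.sum_prod_type]

theorem localOp_one_mulVec (h : 1 + 1 < 3) (v : (Fin 3 → ι) → ℂ) (f : Fin 3 → ι) :
    (localOp R 3 1 h *ᵥ v) f = (R *ᵥ fun q => v ![f 0, q.1, q.2]) (f 1, f 2) := by
  simp only [mulVec, dotProduct, localOp]
  rw [← (finThreeArrowEquiv ι).symm.sum_comp]
  simp [finThreeArrowEquiv_symm_apply, Fin.forall_fin_succ, Fintype.sum_prod_type]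

end LocalOp

section YangBaxter

variable {A : Type} [CommRing A] [Fintype A] [DecidableEq A] (ψ : AddChar A ℂ)

theorem localOp_zero_gaussMatrix_mulVec (h : 0 + 1 < 3) (v : (Fin 3 → A) → ℂ)
    (f : Fin 3 → A) :
    (localOp (gaussMatrix ψ) 3 0 h *ᵥ v) f =
      ∑ s, ψ (s ^ 2 + s * (f 0 - f 1)) * v ![f 0 - s, f 1 - s, f 2] := by
  simp [localOp_zero_mulVec, gaussMatrix_mulVec]

theorem localOp_one_gaussMatrix_mulVec (h : 1 + 1 < 3) (v : (Fin 3 → A) → ℂ)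
    (f : Fin 3 → A) :
    (localOp (gaussMatrix ψ) 3 1 h *ᵥ v) f =
      ∑ s, ψ (s ^ 2 + s * (f 1 - f 2)) * v ![f 0, f 1 - s, f 2 - s] := by
  simp [localOp_one_mulVec, gaussMatrix_mulVec]

def yangBaxterReindex : A × A × A ≃ A × A × A where
  toFun s := (s.2.1 - s.1, s.1 + s.2.2, s.1)
  invFun t := (t.2.2, t.1 + t.2.2, t.2.1 - t.2.2)
  left_inv s := by ext <;> simp
  right_inv t := by ext <;> simp

theorem yangBaxter_gaussMatrix : YangBaxter (gaussMatrix ψ) := by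
  refine Matrix.ext_iff_mulVec.2 fun v => funext fun f => ?_
  simp only [← mulVec_mulVec, localOp_zero_gaussMatrix_mulVec, localOp_one_gaussMatrix_mulVec,
    Finset.mul_sum, Matrix.cons_val_zero, Matrix.cons_val_one, Matrix.cons_val_two,
    Matrix.head_cons, Matrix.tail_cons, ← mul_assoc, ← AddChar.map_add_eq_mul]
  simp_rw [← Fintype.sum_prod_type']
  refine Fintype.sum_equiv yangBaxterReindex _ _ fun s => ?_
  simp only [yangBaxterReindex, Equiv.coe_fn_mk]
  congr 2
  · ring
  · simp only [Matrix.vecCons_inj]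
    exact ⟨by ring, by ring, by ring, trivial⟩

end YangBaxter

theorem ZMod.sum_range_natCast {n : ℕ} [NeZero n] {M : Type*} [AddCommMonoid M]
    (f : ZMod n → M) : ∑ j ∈ Finset.range n, f j = ∑ x, f x :=
  Finset.sum_nbij' (↑) ZMod.val (fun _ _ => Finset.mem_univ _)
    (fun x _ => Finset.mem_range.2 x.val_lt)
    (fun _ hj => ZMod.val_cast_of_lt (Finset.mem_range.1 hj))
    (fun x _ => ZMod.natCast_zmod_val x) (fun _ _ => rfl)

section GaussU

variable (p : ℕ) [NeZero p] {ω : ℂ} (hω : ω ^ p = 1)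

theorem gaussU_eq_weightedShift : gaussU p ω = weightedShift (AddChar.zmodChar p hω) 1 := by
  ext r c
  simp [gaussU, weightedShift, Prod.ext_iff, AddChar.zmodChar_apply]

theorem gaussU_pow (j : ℕ) : gaussU p ω ^ j = weightedShift (AddChar.zmodChar p hω) j := by
  induction j with
  | zero => rw [pow_zero, Nat.cast_zero, weightedShift_zero]
  | succ j ih => rw [pow_succ, ih, gaussU_eq_weightedShift p hω, weightedShift_mul, Nat.cast_succ]

theorem sum_gaussU_pow_eq_gaussMatrix :
    ∑ j ∈ Finset.range p, ω ^ (j ^ 2) • gaussU p ω ^ j =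
      gaussMatrix (AddChar.zmodChar p hω) := by
  simp only [gaussU_pow p hω, ← AddChar.zmodChar_apply' hω, Nat.cast_pow]
  exact ZMod.sum_range_natCast fun x => AddChar.zmodChar p hω (x ^ 2) • weightedShift _ x

end GaussU

theorem stmt8_general (p : ℕ) [NeZero p] (hodd : Odd p)
    (ω : ℂ) (hω : IsPrimitiveRoot ω p) :
    ∃ ζ : ℂ,
      (ζ • ∑ j ∈ Finset.range p, ω ^ (j ^ 2) • gaussU p ω ^ j) ∈
          Matrix.unitaryGroup (ZMod p × ZMod p) ℂ ∧
        YangBaxter (ζ • ∑ j ∈ Finset.range p, ω ^ (j ^ 2) • gaussU p ω ^ j) := by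
  have two_isUnit : IsUnit (2 : ZMod p) := by
    rw [← Nat.cast_ofNat, ZMod.isUnit_iff_coprime]
    exact Nat.coprime_two_left.2 hodd
  rw [sum_gaussU_pow_eq_gaussMatrix p hω.pow_eq_one]
  refine ⟨(Real.sqrt p : ℂ)⁻¹,
    inv_sqrt_smul_mem_unitaryGroup (by exact_mod_cast NeZero.pos p) ?_,
    (yangBaxter_gaussMatrix _).smul _⟩
  rw [gaussMatrix_mul_conjTranspose (AddChar.zmodChar_primitive_of_primitive_root p hω) two_isUnit,
    ZMod.card, Complex.ofReal_natCast]

/-- For `p ≥ 3` odd and `ω` a primitive `p`-th root of unity, there is a scalar `ζ`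
such that `R = ζ · Σ_{j=0}^{p−1} ω^{j²} U^j` is unitary and satisfies the
Yang–Baxter equation on `ℂ^p ⊗ ℂ^p`. -/
theorem stmt8 (p : ℕ) [NeZero p] (hp3 : 3 ≤ p) (hodd : Odd p)
    (ω : ℂ) (hω : IsPrimitiveRoot ω p) :
    ∃ ζ : ℂ,
      (ζ • ∑ j ∈ Finset.range p, ω ^ (j ^ 2) • gaussU p ω ^ j) ∈
          Matrix.unitaryGroup (ZMod p × ZMod p) ℂ ∧
        YangBaxter (ζ • ∑ j ∈ Finset.range p, ω ^ (j ^ 2) • gaussU p ω ^ j) :=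
  stmt8_general p hodd ω hω
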